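/- If ρ_AB is unsteerable (every measurement assemblage on A induces an unsteerable assemblage on B), then for any instrument {Λ_a} on B and any one-way LOCC measurement Q_a = Σ_x M_{a|x} ⊗ N_x (measurement {N_x} on the output of B with outcomes forwarded to choose measurement {M_{a|x}} on A), the success probability Σ_a Tr(Q_a (id_A ⊗ Λ_a)[ρ_AB]) is at most p_corr^NE({Λ_a}) = max_ρ max_{POVM {Q_b}} Σ_a Tr(Q_a Λ_a[ρ]), the optimal success probability without entanglement. -/

import Mathlib

open Matrix BigOperators
open scoped ComplexOrder

/-- Unsteerable assemblage (deterministic decomposition). -/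
def Unsteerable {A X : Type*} [Fintype A] [Fintype X] [DecidableEq A] [DecidableEq X] {n : ℕ}
    (ρ : A → X → Matrix (Fin n) (Fin n) ℂ) : Prop :=
  ∃ σ : (X → A) → Matrix (Fin n) (Fin n) ℂ,
    (∀ f, (σ f).PosSemidef) ∧
    (∀ a x, ρ a x = ∑ f : X → A, if a = f x then σ f else 0)

/-- An assemblage: positive operators, reduced state independent of the input,
and normalized. -/
def IsAssemblage {A X : Type*} [Fintype A] {n : ℕ}
    (ρ : A → X → Matrix (Fin n) (Fin n) ℂ) : Prop :=
  (∀ a x, (ρ a x).PosSemidef) ∧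
  (∀ x x', ∑ a, ρ a x = ∑ a, ρ a x') ∧
  (∀ x, (∑ a, ρ a x).trace = 1)

/-- Steering robustness of an assemblage. -/
noncomputable def SteeringRobustness
    {A X : Type*} [Fintype A] [Fintype X] [DecidableEq A] [DecidableEq X] {n : ℕ}
    (ρ : A → X → Matrix (Fin n) (Fin n) ℂ) : ℝ :=
  sInf {t : ℝ | 0 ≤ t ∧ ∃ τ : A → X → Matrix (Fin n) (Fin n) ℂ, IsAssemblage τ ∧
    Unsteerable (fun a x => (((1 + t)⁻¹ : ℝ) : ℂ) • (ρ a x + ((t : ℝ) : ℂ) • τ a x))}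

open Kronecker

/-- Partial trace over the first (A) factor of a bipartite matrix. -/
noncomputable def ptraceA {dA dB : ℕ} (M : Matrix (Fin dA × Fin dB) (Fin dA × Fin dB) ℂ) :
    Matrix (Fin dB) (Fin dB) ℂ :=
  Matrix.of fun i j => ∑ a, M (a, i) (a, j)

/-- Separable bipartite operators. -/
def IsSeparableState {dA dB : ℕ} (ρ : Matrix (Fin dA × Fin dB) (Fin dA × Fin dB) ℂ) : Prop :=
  ∃ (k : ℕ) (w : Fin k → ℝ) (σA : Fin k → Matrix (Fin dA) (Fin dA) ℂ)
    (σB : Fin k → Matrix (Fin dB) (Fin dB) ℂ),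
    (∀ l, 0 ≤ w l) ∧ (∑ l, w l = 1) ∧
    (∀ l, (σA l).PosSemidef ∧ (σA l).trace = 1) ∧
    (∀ l, (σB l).PosSemidef ∧ (σB l).trace = 1) ∧
    ρ = ∑ l, ((w l : ℝ) : ℂ) • (σA l ⊗ₖ σB l)

/-- The assemblage induced on `B` by measuring `A`. -/
noncomputable def inducedAssemblage {dA dB nA nX : ℕ}
    (M : Fin nA → Fin nX → Matrix (Fin dA) (Fin dA) ℂ)
    (ρ : Matrix (Fin dA × Fin dB) (Fin dA × Fin dB) ℂ) :
    Fin nA → Fin nX → Matrix (Fin dB) (Fin dB) ℂ :=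
  fun a x => ptraceA ((M a x ⊗ₖ (1 : Matrix (Fin dB) (Fin dB) ℂ)) * ρ)

/-- The steering robustness of a bipartite state: the supremum, over measurement
assemblages on `A`, of the steering robustness of the induced assemblage on `B`. -/
noncomputable def Rsteer {dA dB : ℕ}
    (ρ : Matrix (Fin dA × Fin dB) (Fin dA × Fin dB) ℂ) : ℝ :=
  sSup {r : ℝ | ∃ (nA nX : ℕ) (M : Fin nA → Fin nX → Matrix (Fin dA) (Fin dA) ℂ),
    (∀ a x, (M a x).PosSemidef) ∧ (∀ x, ∑ a, M a x = 1) ∧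
    r = SteeringRobustness (inducedAssemblage M ρ)}

/-- Generalized robustness of entanglement. -/
noncomputable def Rg {dA dB : ℕ}
    (ρ : Matrix (Fin dA × Fin dB) (Fin dA × Fin dB) ℂ) : ℝ :=
  sInf {t : ℝ | 0 ≤ t ∧ ∃ τ : Matrix (Fin dA × Fin dB) (Fin dA × Fin dB) ℂ,
    τ.PosSemidef ∧ τ.trace = 1 ∧
    IsSeparableState ((((1 + t)⁻¹ : ℝ) : ℂ) • (ρ + ((t : ℝ) : ℂ) • τ))}

/-- Complete positivity via Kraus decomposition. -/
def IsCP {dB dC : ℕ}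
    (Λ : Matrix (Fin dB) (Fin dB) ℂ →ₗ[ℂ] Matrix (Fin dC) (Fin dC) ℂ) : Prop :=
  ∃ (r : ℕ) (K : Fin r → Matrix (Fin dC) (Fin dB) ℂ),
    ∀ ρ, Λ ρ = ∑ i, K i * ρ * (K i)ᴴ

/-- The map `id_A ⊗ Λ` acting blockwise on a bipartite matrix. -/
noncomputable def idTensor {dA dB dC : ℕ}
    (Λ : Matrix (Fin dB) (Fin dB) ℂ →ₗ[ℂ] Matrix (Fin dC) (Fin dC) ℂ)
    (M : Matrix (Fin dA × Fin dB) (Fin dA × Fin dB) ℂ) :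
    Matrix (Fin dA × Fin dC) (Fin dA × Fin dC) ℂ :=
  Matrix.of fun p q => Λ (Matrix.of fun b b' => M (p.1, b) (q.1, b')) p.2 q.2

/-- Optimal success probability of subchannel discrimination without entanglement. -/
noncomputable def pNE {dB dC k : ℕ}
    (Λ : Fin k → (Matrix (Fin dB) (Fin dB) ℂ →ₗ[ℂ] Matrix (Fin dC) (Fin dC) ℂ)) : ℝ :=
  sSup {r : ℝ | ∃ (ρ : Matrix (Fin dB) (Fin dB) ℂ) (Q : Fin k → Matrix (Fin dC) (Fin dC) ℂ),
    ρ.PosSemidef ∧ ρ.trace = 1 ∧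
    (∀ b, (Q b).PosSemidef) ∧ (∑ b, Q b = 1) ∧
    r = (∑ a, ((Q a) * (Λ a) ρ).trace).re}

/-!
Decompose the assemblage `σ_{a|x}` induced by `{M_{a|x}}` into deterministic strategies
`f : x ↦ a` with hidden states `σ_f ≥ 0`. On `σ_f` the one-way protocol is a protocol on `B`
alone: prepare `σ_f`, measure the POVM `{N_x}` coarse-grained along `f`. Its success probability
is therefore at most `Tr σ_f · p^NE`, and `∑_f Tr σ_f = Tr ρ_AB = 1`.
-/

namespace Matrix.PosSemidef

variable {n : Type*} [Fintype n]

lemma trace_mul_nonneg {A B : Matrix n n ℂ} (hA : A.PosSemidef) (hB : B.PosSemidef) :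
    0 ≤ (A * B).trace := by
  classical
  open scoped MatrixOrder in
  obtain ⟨C, rfl⟩ := CStarAlgebra.nonneg_iff_eq_star_mul_self.mp hB.nonneg
  rw [star_eq_conjTranspose, ← Matrix.mul_assoc, trace_mul_comm, ← Matrix.mul_assoc]
  exact (hA.mul_mul_conjTranspose_same C).trace_nonneg

lemma trace_eq_ofReal_re {A : Matrix n n ℂ} (hA : A.PosSemidef) : A.trace = (A.trace.re : ℂ) :=
  Complex.eq_re_of_ofReal_le (Complex.ofReal_zero ▸ hA.trace_nonneg)

end Matrix.PosSemidef

lemma IsCP.posSemidef_apply {dB dC : ℕ}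
    {Λ : Matrix (Fin dB) (Fin dB) ℂ →ₗ[ℂ] Matrix (Fin dC) (Fin dC) ℂ} (hΛ : IsCP Λ)
    {ρ : Matrix (Fin dB) (Fin dB) ℂ} (hρ : ρ.PosSemidef) : (Λ ρ).PosSemidef := by
  obtain ⟨r, K, hK⟩ := hΛ
  rw [hK]
  exact posSemidef_sum _ fun i _ => hρ.mul_mul_conjTranspose_same (K i)

lemma posSemidef_one_sub_of_sum_eq_one {ι n : Type*} [Fintype ι] [Fintype n] [DecidableEq n]
    {Q : ι → Matrix n n ℂ} (hQ : ∀ i, (Q i).PosSemidef) (hQsum : ∑ i, Q i = 1) (i : ι) :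
    (1 - Q i).PosSemidef := by
  classical
  rw [← hQsum, ← Finset.sum_erase_eq_sub (Finset.mem_univ i)]
  exact posSemidef_sum _ fun j _ => hQ j

lemma re_trace_mul_le_re_trace {n : Type*} [Fintype n] [DecidableEq n] {Q X : Matrix n n ℂ}
    (hQ : (1 - Q).PosSemidef) (hX : X.PosSemidef) : (Q * X).trace.re ≤ X.trace.re := by
  have := Complex.le_def.mp (hQ.trace_mul_nonneg hX)
  simp only [Matrix.sub_mul, Matrix.one_mul, trace_sub, Complex.zero_re, Complex.sub_re] at this
  linarith [this.1]

-- `(comp _ _ _ _ R).symm X α β` is the `(α, β)` block of a matrix `X` indexed by `l × m`.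
lemma ptraceA_kronecker_one_mul {dA dB : ℕ} (A : Matrix (Fin dA) (Fin dA) ℂ)
    (ρ : Matrix (Fin dA × Fin dB) (Fin dA × Fin dB) ℂ) :
    ptraceA ((A ⊗ₖ (1 : Matrix (Fin dB) (Fin dB) ℂ)) * ρ) =
      ∑ α, ∑ β, A α β • (comp _ _ _ _ ℂ).symm ρ β α := by
  ext i j
  simp [ptraceA, mul_apply, Fintype.sum_prod_type, one_apply, Matrix.sum_apply]

lemma trace_kronecker_mul {l m R : Type*} [Fintype l] [Fintype m] [CommSemiring R]
    (A : Matrix l l R) (B : Matrix m m R) (X : Matrix (l × m) (l × m) R) :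
    ((A ⊗ₖ B) * X).trace = ∑ α, ∑ β, A α β * (B * (comp _ _ _ _ R).symm X β α).trace := by
  simp only [trace, diag, mul_apply, kroneckerMap_apply, Fintype.sum_prod_type, comp_symm_apply,
    Finset.mul_sum, mul_assoc]
  exact Finset.sum_congr rfl fun _ _ => Finset.sum_comm

lemma ptraceA_eq_sum_comp_symm {dA dB : ℕ} (ρ : Matrix (Fin dA × Fin dB) (Fin dA × Fin dB) ℂ) :
    ptraceA ρ = ∑ α, (comp _ _ _ _ ℂ).symm ρ α α := by
  ext i j
  simp [ptraceA, Matrix.sum_apply]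

lemma trace_ptraceA {dA dB : ℕ} (ρ : Matrix (Fin dA × Fin dB) (Fin dA × Fin dB) ℂ) :
    (ptraceA ρ).trace = ρ.trace := by
  simp only [ptraceA, trace, diag, of_apply, Fintype.sum_prod_type]
  exact Finset.sum_comm

lemma sum_inducedAssemblage {dA dB nA nX : ℕ} {M : Fin nA → Fin nX → Matrix (Fin dA) (Fin dA) ℂ}
    {x : Fin nX} (hM : ∑ a, M a x = 1) (ρ : Matrix (Fin dA × Fin dB) (Fin dA × Fin dB) ℂ) :
    ∑ a, inducedAssemblage M ρ a x = ptraceA ρ := by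
  simp only [inducedAssemblage, ptraceA_kronecker_one_mul]
  rw [ptraceA_eq_sum_comp_symm ρ, Finset.sum_comm]
  refine Finset.sum_congr rfl fun α _ => ?_
  rw [Finset.sum_comm]
  simp_rw [← Finset.sum_smul, ← Matrix.sum_apply, hM, one_apply, ite_smul, one_smul, zero_smul]
  simp

lemma trace_kronecker_mul_idTensor {dA dB dC : ℕ}
    (Λ : Matrix (Fin dB) (Fin dB) ℂ →ₗ[ℂ] Matrix (Fin dC) (Fin dC) ℂ)
    (A : Matrix (Fin dA) (Fin dA) ℂ) (B : Matrix (Fin dC) (Fin dC) ℂ)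
    (ρ : Matrix (Fin dA × Fin dB) (Fin dA × Fin dB) ℂ) :
    ((A ⊗ₖ B) * idTensor Λ ρ).trace =
      (B * Λ (ptraceA ((A ⊗ₖ (1 : Matrix (Fin dB) (Fin dB) ℂ)) * ρ))).trace := by
  simp only [trace_kronecker_mul, ptraceA_kronecker_one_mul, map_sum, map_smul, Matrix.mul_sum,
    trace_sum, Matrix.mul_smul, trace_smul, smul_eq_mul]
  rfl

def coarseGrain {X A M : Type*} [Fintype X] [DecidableEq A] [AddCommMonoid M] (N : X → M)
    (f : X → A) (a : A) : M :=
  ∑ x with f x = a, N x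

lemma sum_coarseGrain {X A M : Type*} [Fintype X] [Fintype A] [DecidableEq A] [AddCommMonoid M]
    (N : X → M) (f : X → A) : ∑ a, coarseGrain N f a = ∑ x, N x :=
  Finset.sum_fiberwise _ _ _

lemma coarseGrain_posSemidef {X A n : Type*} [Fintype X] [DecidableEq A] [Fintype n]
    {N : X → Matrix n n ℂ} (hN : ∀ x, (N x).PosSemidef) (f : X → A) (a : A) :
    (coarseGrain N f a).PosSemidef :=
  posSemidef_sum _ fun x _ => hN x

lemma sum_trace_mul_coarseGrain {X A n m : Type*} [Fintype X] [Fintype A] [DecidableEq A]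
    [Fintype m] (Λ : A → Matrix n n ℂ →ₗ[ℂ] Matrix m m ℂ) (N : X → Matrix m m ℂ)
    (f : X → A) (τ : Matrix n n ℂ) :
    ∑ a, (coarseGrain N f a * Λ a τ).trace = ∑ x, (N x * Λ (f x) τ).trace := by
  simp only [coarseGrain, Finset.sum_filter, Finset.sum_mul, ite_mul, zero_mul, trace_sum,
    apply_ite trace, trace_zero]
  rw [Finset.sum_comm]
  simp

section decomposition

variable {X A : Type*} [Fintype X] [Fintype A] [DecidableEq X] [DecidableEq A]

lemma sum_eq_sum_of_decomposition {M : Type*} [AddCommMonoid M] {ρ : A → X → M}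
    {σ : (X → A) → M} (hρ : ∀ a x, ρ a x = ∑ f : X → A, if a = f x then σ f else 0) (x : X) :
    ∑ f, σ f = ∑ a, ρ a x := by
  simp only [hρ]
  rw [Finset.sum_comm]
  simp

lemma sum_sum_trace_mul_eq_of_decomposition {n m : Type*} [Fintype m]
    {ρ : A → X → Matrix n n ℂ} {σ : (X → A) → Matrix n n ℂ}
    (Λ : A → Matrix n n ℂ →ₗ[ℂ] Matrix m m ℂ) (N : X → Matrix m m ℂ)
    (hρ : ∀ a x, ρ a x = ∑ f : X → A, if a = f x then σ f else 0) :
    ∑ a, ∑ x, (N x * Λ a (ρ a x)).trace = ∑ f, ∑ a, (coarseGrain N f a * Λ a (σ f)).trace := by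
  simp only [sum_trace_mul_coarseGrain, hρ, map_sum, Matrix.mul_sum, trace_sum, apply_ite,
    map_zero, Matrix.mul_zero, trace_zero]
  rw [Finset.sum_comm]
  refine (Finset.sum_congr rfl fun x _ => Finset.sum_comm).trans ?_
  rw [Finset.sum_comm]
  simp

end decomposition

section pNE

variable {dB dC k : ℕ} {Λ : Fin k → (Matrix (Fin dB) (Fin dB) ℂ →ₗ[ℂ] Matrix (Fin dC) (Fin dC) ℂ)}
  {ρ : Matrix (Fin dB) (Fin dB) ℂ} {Q : Fin k → Matrix (Fin dC) (Fin dC) ℂ}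

lemma re_sum_trace_mul_nonneg (hCP : ∀ a, IsCP (Λ a)) (hρ : ρ.PosSemidef)
    (hQ : ∀ a, (Q a).PosSemidef) : 0 ≤ (∑ a, (Q a * Λ a ρ).trace).re := by
  rw [Complex.re_sum]
  exact Finset.sum_nonneg fun a _ =>
    (Complex.le_def.mp ((hQ a).trace_mul_nonneg ((hCP a).posSemidef_apply hρ))).1

lemma re_sum_trace_mul_le_re_trace (hCP : ∀ a, IsCP (Λ a))
    (hTP : ∀ ρ : Matrix (Fin dB) (Fin dB) ℂ, ∑ a, (Λ a ρ).trace = ρ.trace) (hρ : ρ.PosSemidef)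
    (hQ : ∀ a, (Q a).PosSemidef) (hQsum : ∑ a, Q a = 1) :
    (∑ a, (Q a * Λ a ρ).trace).re ≤ ρ.trace.re :=
  calc (∑ a, (Q a * Λ a ρ).trace).re = ∑ a, (Q a * Λ a ρ).trace.re := Complex.re_sum _ _
    _ ≤ ∑ a, (Λ a ρ).trace.re := Finset.sum_le_sum fun a _ =>
      re_trace_mul_le_re_trace (posSemidef_one_sub_of_sum_eq_one hQ hQsum a)
        ((hCP a).posSemidef_apply hρ)
    _ = ρ.trace.re := by rw [← Complex.re_sum, hTP]

lemma pNE_nonneg (hCP : ∀ a, IsCP (Λ a)) : 0 ≤ pNE Λ :=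
  Real.sSup_nonneg fun _ ⟨_, _, hρ, _, hQ, _, hr⟩ => hr ▸ re_sum_trace_mul_nonneg hCP hρ hQ

lemma re_sum_trace_mul_le_pNE (hCP : ∀ a, IsCP (Λ a))
    (hTP : ∀ ρ : Matrix (Fin dB) (Fin dB) ℂ, ∑ a, (Λ a ρ).trace = ρ.trace) (hρ : ρ.PosSemidef)
    (hρtr : ρ.trace = 1) (hQ : ∀ a, (Q a).PosSemidef) (hQsum : ∑ a, Q a = 1) :
    (∑ a, (Q a * Λ a ρ).trace).re ≤ pNE Λ := by
  refine le_csSup ⟨1, ?_⟩ ⟨ρ, Q, hρ, hρtr, hQ, hQsum, rfl⟩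
  rintro _ ⟨ρ', Q', hρ', hρ'tr, hQ', hQ'sum, rfl⟩
  simpa [hρ'tr] using re_sum_trace_mul_le_re_trace hCP hTP hρ' hQ' hQ'sum

lemma re_sum_trace_mul_le_re_trace_mul_pNE (hCP : ∀ a, IsCP (Λ a))
    (hTP : ∀ ρ : Matrix (Fin dB) (Fin dB) ℂ, ∑ a, (Λ a ρ).trace = ρ.trace) (hρ : ρ.PosSemidef)
    (hQ : ∀ a, (Q a).PosSemidef) (hQsum : ∑ a, Q a = 1) :
    (∑ a, (Q a * Λ a ρ).trace).re ≤ ρ.trace.re * pNE Λ := by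
  set t := ρ.trace.re
  have htr : ρ.trace = t := hρ.trace_eq_ofReal_re
  rcases (show 0 ≤ t by exact_mod_cast htr ▸ hρ.trace_nonneg).eq_or_lt with ht | ht
  · obtain rfl : ρ = 0 := hρ.trace_eq_zero_iff.mp (by rw [htr, ← ht, Complex.ofReal_zero])
    rw [← ht, zero_mul]
    simp
  · have hnormalized := re_sum_trace_mul_le_pNE hCP hTP
      (hρ.smul (Complex.zero_le_real.mpr (inv_nonneg.mpr ht.le)))
      (by rw [trace_smul, htr, smul_eq_mul, ← Complex.ofReal_mul, inv_mul_cancel₀ ht.ne',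
        Complex.ofReal_one]) hQ hQsum
    simp only [map_smul, Matrix.mul_smul, trace_smul, smul_eq_mul, ← Finset.mul_sum,
      Complex.re_ofReal_mul] at hnormalized
    rwa [inv_mul_le_iff₀ ht] at hnormalized

end pNE

theorem unsteerable_state_useless_for_oneway_discrimination_general
    {dA dB dC k nX : ℕ}
    (ρAB : Matrix (Fin dA × Fin dB) (Fin dA × Fin dB) ℂ)
    (htr : ρAB.trace = 1)
    (hUnst : ∀ (nA nX' : ℕ) (M : Fin nA → Fin nX' → Matrix (Fin dA) (Fin dA) ℂ),
      (∀ a x, (M a x).PosSemidef) → (∀ x, ∑ a, M a x = 1) →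
      Unsteerable (inducedAssemblage M ρAB))
    (Λ : Fin k → (Matrix (Fin dB) (Fin dB) ℂ →ₗ[ℂ] Matrix (Fin dC) (Fin dC) ℂ))
    (hCP : ∀ a, IsCP (Λ a))
    (hTP : ∀ ρ : Matrix (Fin dB) (Fin dB) ℂ, ∑ a, ((Λ a) ρ).trace = ρ.trace)
    (N : Fin nX → Matrix (Fin dC) (Fin dC) ℂ)
    (hN : ∀ x, (N x).PosSemidef) (hNsum : ∑ x, N x = 1)
    (M : Fin k → Fin nX → Matrix (Fin dA) (Fin dA) ℂ)
    (hM : ∀ a x, (M a x).PosSemidef) (hMsum : ∀ x, ∑ a, M a x = 1) :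
    (∑ a, (((∑ x, M a x ⊗ₖ N x) * idTensor (Λ a) ρAB)).trace).re ≤ pNE Λ := by
  obtain ⟨σ, hσ, hdecomp⟩ := hUnst k nX M hM hMsum
  rcases isEmpty_or_nonempty (Fin nX) with hX | ⟨⟨x₀⟩⟩
  · simpa using pNE_nonneg hCP
  have hσtr : ∑ f, (σ f).trace.re = 1 := by
    rw [← Complex.re_sum, ← trace_sum, sum_eq_sum_of_decomposition hdecomp x₀,
      sum_inducedAssemblage (hMsum x₀), trace_ptraceA, htr, Complex.one_re]
  calc (∑ a, ((∑ x, M a x ⊗ₖ N x) * idTensor (Λ a) ρAB).trace).re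
      = (∑ a, ∑ x, (N x * Λ a (inducedAssemblage M ρAB a x)).trace).re := by
        simp only [Finset.sum_mul, trace_sum, trace_kronecker_mul_idTensor]
        rfl
    _ = ∑ f, (∑ a, (coarseGrain N f a * Λ a (σ f)).trace).re := by
        rw [sum_sum_trace_mul_eq_of_decomposition Λ N hdecomp, Complex.re_sum]
    _ ≤ ∑ f, (σ f).trace.re * pNE Λ := Finset.sum_le_sum fun f _ =>
        re_sum_trace_mul_le_re_trace_mul_pNE hCP hTP (hσ f) (coarseGrain_posSemidef hN f)
          (by rw [sum_coarseGrain, hNsum])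
    _ = pNE Λ := by rw [← Finset.sum_mul, hσtr, one_mul]

/-- If `ρ_AB` is unsteerable, then for any instrument on `B` and any one-way
(B→A) LOCC measurement, the subchannel-discrimination success probability does not
exceed the optimal success probability without entanglement. -/
theorem unsteerable_state_useless_for_oneway_discrimination
    {dA dB dC k nX : ℕ}
    (ρAB : Matrix (Fin dA × Fin dB) (Fin dA × Fin dB) ℂ)
    (hρ : ρAB.PosSemidef) (htr : ρAB.trace = 1)
    (hUnst : ∀ (nA nX' : ℕ) (M : Fin nA → Fin nX' → Matrix (Fin dA) (Fin dA) ℂ),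
      (∀ a x, (M a x).PosSemidef) → (∀ x, ∑ a, M a x = 1) →
      Unsteerable (inducedAssemblage M ρAB))
    (Λ : Fin k → (Matrix (Fin dB) (Fin dB) ℂ →ₗ[ℂ] Matrix (Fin dC) (Fin dC) ℂ))
    (hCP : ∀ a, IsCP (Λ a))
    (hTP : ∀ ρ : Matrix (Fin dB) (Fin dB) ℂ, ∑ a, ((Λ a) ρ).trace = ρ.trace)
    (N : Fin nX → Matrix (Fin dC) (Fin dC) ℂ)
    (hN : ∀ x, (N x).PosSemidef) (hNsum : ∑ x, N x = 1)
    (M : Fin k → Fin nX → Matrix (Fin dA) (Fin dA) ℂ)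
    (hM : ∀ a x, (M a x).PosSemidef) (hMsum : ∀ x, ∑ a, M a x = 1) :
    (∑ a, (((∑ x, M a x ⊗ₖ N x) * idTensor (Λ a) ρAB)).trace).re ≤ pNE Λ :=
  unsteerable_state_useless_for_oneway_discrimination_general ρAB htr hUnst Λ hCP hTP N hN hNsum M
    hM hMsum
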